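/- Let E be a model category with functorial factorizations giving a cofibrant replacement functor Q (with a natural trivial fibration q_X : QX → X, QX cofibrant) and a fibrant replacement functor R (with a natural trivial cofibration r_X : X → RX, RX fibrant). Let D ⊆ E be a full subcategory closed under Q and R and such that every object of D admits a cylinder object belonging to D, and let W_D be the class of weak equivalences of E lying in D. If X, Y ∈ D are both fibrant and cofibrant, then the map Hom_D(X, Y) → Hom_{D[W_D⁻¹]}(X, Y), f ↦ L(f), induced by the canonical localization functor L : D → D[W_D⁻¹], is surjective. -/

import Mathlib

/-!
After localization, the zigzag `X ← QX → RQX` identifies each object of `D` naturally with a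
fibrant-cofibrant one, turning every morphism `LX ⟶ LY` into a morphism `L(RQX) ⟶ L(RQY)`. All
of these are images of maps `RQX ⟶ RQY`: that class contains every `L(RQu)`, is closed under
composition, and contains the inverse of `L(RQw)` for each weak equivalence `w`, because `RQw`
goes from a fibrant to a cofibrant object and so has a homotopy right inverse, and homotopic maps
(through a cylinder lying in `D`) agree in the localization. When `X` is cofibrant and `Y` is
fibrant the zigzags are realized by maps `X ⟶ QX ⟶ RQX` (a section of `q_X`) and `RQY ⟶ Y`
(an extension of `q_Y` along `r_{QY}`).
-/

open CategoryTheory Limits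

universe v u

/-- `f` is a retract of `g` in the arrow category. -/
def IsRetractOf {C : Type u} [Category.{v} C] {X Y X' Y' : C}
    (f : X ⟶ Y) (g : X' ⟶ Y') : Prop :=
  ∃ (i : X ⟶ X') (r : X' ⟶ X) (j : Y ⟶ Y') (s : Y' ⟶ Y),
    i ≫ r = 𝟙 X ∧ j ≫ s = 𝟙 Y ∧ f ≫ j = i ≫ g ∧ r ≫ f = g ≫ s

/-- A (Quillen) model structure on a category `C`: three classes of morphisms (weak
equivalences, fibrations, cofibrations) satisfying two-out-of-three, closure under
retracts, lifting, and factorization. -/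
structure ModelStructure (C : Type u) [Category.{v} C] where
  W : MorphismProperty C
  Fib : MorphismProperty C
  Cof : MorphismProperty C
  w_id : ∀ X : C, W (𝟙 X)
  fib_id : ∀ X : C, Fib (𝟙 X)
  cof_id : ∀ X : C, Cof (𝟙 X)
  w_comp : ∀ {X Y Z : C} (f : X ⟶ Y) (g : Y ⟶ Z), W f → W g → W (f ≫ g)
  w_cancel_left : ∀ {X Y Z : C} (f : X ⟶ Y) (g : Y ⟶ Z), W f → W (f ≫ g) → W g
  w_cancel_right : ∀ {X Y Z : C} (f : X ⟶ Y) (g : Y ⟶ Z), W g → W (f ≫ g) → W f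
  w_retract : ∀ {X Y X' Y' : C} (f : X ⟶ Y) (g : X' ⟶ Y'), IsRetractOf f g → W g → W f
  fib_retract : ∀ {X Y X' Y' : C} (f : X ⟶ Y) (g : X' ⟶ Y'), IsRetractOf f g → Fib g → Fib f
  cof_retract : ∀ {X Y X' Y' : C} (f : X ⟶ Y) (g : X' ⟶ Y'), IsRetractOf f g → Cof g → Cof f
  lift_trivCof_fib : ∀ {A B X Y : C} (i : A ⟶ B) (p : X ⟶ Y),
    Cof i → W i → Fib p → HasLiftingProperty i p
  lift_cof_trivFib : ∀ {A B X Y : C} (i : A ⟶ B) (p : X ⟶ Y),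
    Cof i → Fib p → W p → HasLiftingProperty i p
  factor_cof_trivFib : ∀ {X Y : C} (f : X ⟶ Y),
    ∃ (Z : C) (i : X ⟶ Z) (p : Z ⟶ Y), Cof i ∧ Fib p ∧ W p ∧ i ≫ p = f
  factor_trivCof_fib : ∀ {X Y : C} (f : X ⟶ Y),
    ∃ (Z : C) (i : X ⟶ Z) (p : Z ⟶ Y), Cof i ∧ W i ∧ Fib p ∧ i ≫ p = f

variable {C : Type u} [Category.{v} C]

/-- An object is fibrant if the map to the terminal object is a fibration. -/
def ModelStructure.Fibrant [HasTerminal C] (MS : ModelStructure C) (X : C) : Prop :=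
  MS.Fib (terminal.from X)

/-- An object is cofibrant if the map from the initial object is a cofibration. -/
def ModelStructure.Cofibrant [HasInitial C] (MS : ModelStructure C) (X : C) : Prop :=
  MS.Cof (initial.to X)

/-- A cylinder object for `X`: a factorization of the fold map `X ⊔ X → X` as a
cofibration followed by a weak equivalence. -/
structure CylObj [HasBinaryCoproducts C] (MS : ModelStructure C) (X : C) where
  I : C
  i₀ : X ⟶ I
  i₁ : X ⟶ I
  π : I ⟶ X
  cof : MS.Cof (coprod.desc i₀ i₁)
  we : MS.W π
  h₀ : i₀ ≫ π = 𝟙 X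
  h₁ : i₁ ≫ π = 𝟙 X

/-- Left homotopy of maps, via some cylinder object. -/
def LeftHomotopic [HasBinaryCoproducts C] (MS : ModelStructure C) {X Y : C}
    (f g : X ⟶ Y) : Prop :=
  ∃ (cyl : CylObj MS X) (H : cyl.I ⟶ Y), cyl.i₀ ≫ H = f ∧ cyl.i₁ ≫ H = g

/-- The class of weak equivalences of `E` lying in the full subcategory of objects
satisfying `P`. -/
def subW {E : Type u} [Category.{v} E] (MS : ModelStructure E) (P : E → Prop) :
    MorphismProperty (ObjectProperty.FullSubcategory P) :=
  fun X Y f => MS.W (X := X.obj) (Y := Y.obj) f.hom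

namespace ModelStructure

variable (MS : ModelStructure C)

def IsCofibrantReplacement [HasInitial C] {Q : C ⥤ C} (q : Q ⟶ 𝟭 C) : Prop :=
  ∀ X, MS.Fib (q.app X) ∧ MS.W (q.app X) ∧ MS.Cofibrant (Q.obj X)

def IsFibrantReplacement [HasTerminal C] {R : C ⥤ C} (r : 𝟭 C ⟶ R) : Prop :=
  ∀ X, MS.Cof (r.app X) ∧ MS.W (r.app X) ∧ MS.Fibrant (R.obj X)

theorem cof_comp {A B Z : C} {f : A ⟶ B} {g : B ⟶ Z} (hf : MS.Cof f) (hg : MS.Cof g) :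
    MS.Cof (f ≫ g) := by
  obtain ⟨M, c, p, hc, hp, hpw, hcp⟩ := MS.factor_cof_trivFib (f ≫ g)
  have := MS.lift_cof_trivFib f p hf hp hpw
  have := MS.lift_cof_trivFib g p hg hp hpw
  have sq₁ : CommSq c f p g := ⟨hcp⟩
  have sq₂ : CommSq sq₁.lift g p (𝟙 Z) := ⟨by simp⟩
  -- `f ≫ g` is a retract of `c`
  refine MS.cof_retract (f ≫ g) c
    ⟨𝟙 A, 𝟙 A, sq₂.lift, p, by simp, by simp, ?_, by simp [hcp]⟩ hc
  simp

theorem cofibrant_of_cof [HasInitial C] {A B : C} {i : A ⟶ B} (hA : MS.Cofibrant A)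
    (hi : MS.Cof i) : MS.Cofibrant B := by
  simpa [ModelStructure.Cofibrant] using MS.cof_comp hA hi

theorem exists_section_of_cofibrant [HasInitial C] {Z T : C} {p : Z ⟶ T}
    (hp : MS.Fib p) (hpw : MS.W p) (hT : MS.Cofibrant T) :
    ∃ s : T ⟶ Z, s ≫ p = 𝟙 T := by
  have := MS.lift_cof_trivFib _ p hT hp hpw
  have sq : CommSq (initial.to Z) (initial.to T) p (𝟙 T) := ⟨by simp⟩
  exact ⟨sq.lift, sq.fac_right⟩

theorem exists_extension_of_fibrant [HasTerminal C] {A B F : C} {i : A ⟶ B}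
    (hi : MS.Cof i) (hiw : MS.W i) (hF : MS.Fibrant F) (h : A ⟶ F) :
    ∃ t : B ⟶ F, i ≫ t = h := by
  have := MS.lift_trivCof_fib i _ hi hiw hF
  have sq : CommSq h i (terminal.from F) (terminal.from B) := ⟨by simp⟩
  exact ⟨sq.lift, sq.fac_left⟩

theorem w_map_iff_of_natTrans {D : Type*} [Category D] {F G : D ⥤ C} (τ : F ⟶ G)
    (hτ : ∀ X, MS.W (τ.app X)) {X Y : D} (f : X ⟶ Y) : MS.W (F.map f) ↔ MS.W (G.map f) := by
  have hsq : MS.W (F.map f ≫ τ.app Y) ↔ MS.W (τ.app X ≫ G.map f) := by rw [τ.naturality]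
  constructor
  · exact fun h => MS.w_cancel_left _ _ (hτ X) (hsq.1 (MS.w_comp _ _ h (hτ Y)))
  · exact fun h => MS.w_cancel_right _ _ (hτ Y) (hsq.2 (MS.w_comp _ _ (hτ X) h))

theorem exists_homotopy_rightInverse [HasBinaryCoproducts C] [HasInitial C] [HasTerminal C]
    {S T : C} {u : S ⟶ T} (hu : MS.W u) (hS : MS.Fibrant S) (hT : MS.Cofibrant T)
    (cyl : CylObj MS S) :
    ∃ (g : T ⟶ S) (H : cyl.I ⟶ S), cyl.i₀ ≫ H = 𝟙 S ∧ cyl.i₁ ≫ H = u ≫ g := by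
  obtain ⟨Z, i, p, hi, hiw, hp, rfl⟩ := MS.factor_trivCof_fib u
  have hpw : MS.W p := MS.w_cancel_left i p hiw hu
  obtain ⟨ρ, hρ⟩ := MS.exists_extension_of_fibrant hi hiw hS (𝟙 S)
  obtain ⟨s, hs⟩ := MS.exists_section_of_cofibrant hp hpw hT
  -- a homotopy from `i` to `i ≫ p ≫ s` on the cylinder of `S`, then postcomposed with `ρ`
  have := MS.lift_cof_trivFib _ p cyl.cof hp hpw
  have sq :
      CommSq (coprod.desc i (i ≫ p ≫ s)) (coprod.desc cyl.i₀ cyl.i₁) p (cyl.π ≫ i ≫ p) :=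
    ⟨by ext <;> simp [hs, reassoc_of% cyl.h₀, reassoc_of% cyl.h₁]⟩
  have h₀ : cyl.i₀ ≫ sq.lift = i := by
    simpa only [coprod.inl_desc_assoc, coprod.inl_desc] using coprod.inl ≫= sq.fac_left
  have h₁ : cyl.i₁ ≫ sq.lift = i ≫ p ≫ s := by
    simpa only [coprod.inr_desc_assoc, coprod.inr_desc] using coprod.inr ≫= sq.fac_left
  exact ⟨s ≫ ρ, sq.lift ≫ ρ, by rw [reassoc_of% h₀, hρ], by simp [reassoc_of% h₁]⟩

end ModelStructure

namespace CategoryTheory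

theorem Functor.map_eq_map_of_comp_eq_id {D : Type*} [Category D] (L : C ⥤ D)
    {X I : C} {i₀ i₁ : X ⟶ I} {π : I ⟶ X} [IsIso (L.map π)] (h₀ : i₀ ≫ π = 𝟙 X)
    (h₁ : i₁ ≫ π = 𝟙 X) : L.map i₀ = L.map i₁ := by
  rw [← cancel_mono (L.map π), ← L.map_comp, ← L.map_comp, h₀, h₁]

theorem MorphismProperty.isIso_whiskerRight_Q {D : Type*} [Category D]
    (W : MorphismProperty C) {F G : D ⥤ C} (τ : F ⟶ G) (hτ : ∀ X, W (τ.app X)) :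
    IsIso (Functor.whiskerRight τ W.Q) := by
  rw [NatTrans.isIso_iff_isIso_app]
  exact fun X => W.Q_inverts _ (hτ X)

theorem MorphismProperty.exists_hom_app_comp_Q_map_comp_inv_app_eq
    {W : MorphismProperty C} {G : C ⥤ C} (e : W.Q ≅ G ⋙ W.Q)
    (hG : ∀ ⦃a b : C⦄ (w : a ⟶ b), W w →
      ∃ g : G.obj b ⟶ G.obj a, W.Q.map (G.map w ≫ g) = 𝟙 _)
    {a b : C} (φ : W.Q.obj a ⟶ W.Q.obj b) :
    ∃ f : G.obj a ⟶ G.obj b, e.hom.app a ≫ W.Q.map f ≫ e.inv.app b = φ := by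
  have conj_comp {a b c : C} (f : G.obj a ⟶ G.obj b) (g : G.obj b ⟶ G.obj c) :
      (e.hom.app a ≫ W.Q.map f ≫ e.inv.app b) ≫ (e.hom.app b ≫ W.Q.map g ≫ e.inv.app c) =
        e.hom.app a ≫ W.Q.map (f ≫ g) ≫ e.inv.app c := by
    simp
  have conj_wInv {a b : C} (w : a ⟶ b) (hw : W w) : ∃ g : G.obj b ⟶ G.obj a,
      e.hom.app b ≫ W.Q.map g ≫ e.inv.app a = Localization.Construction.wInv w hw := by
    obtain ⟨g, hg⟩ := hG w hw
    rw [Functor.map_comp] at hg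
    refine ⟨g, Iso.inv_ext' ?_⟩
    change W.Q.map w ≫ _ = _
    simp [← NatIso.naturality_2 e w, reassoc_of% hg]
  let obj := Localization.Construction.objEquiv W
  let P : MorphismProperty W.Localization := fun A B φ =>
    ∃ f : G.obj (obj.symm A) ⟶ G.obj (obj.symm B),
      e.hom.app _ ≫ W.Q.map f ≫ e.inv.app _ = φ
  have : P.IsStableUnderComposition := ⟨by
    rintro _ _ _ _ _ ⟨f, rfl⟩ ⟨g, rfl⟩
    exact ⟨f ≫ g, (conj_comp f g).symm⟩⟩
  have hP : P = ⊤ := Localization.Construction.morphismProperty_eq_top P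
    (fun _ _ u => ⟨G.map u, NatIso.naturality_2 e u⟩) (fun _ _ w hw => conj_wInv w hw)
  obtain ⟨f, hf⟩ : P φ := by rw [hP]; exact MorphismProperty.top_apply φ
  exact ⟨f, hf⟩

end CategoryTheory

open ObjectProperty

section Replacement

variable {E : Type u} [Category.{v} E] {MS : ModelStructure E} {P : E → Prop}

theorem CategoryTheory.MorphismProperty.IsInvertedBy.map_eq_of_cylinder_homotopy
    [HasBinaryCoproducts E] {D : Type*} [Category D] {L : FullSubcategory P ⥤ D}
    (hL : (subW MS P).IsInvertedBy L) {a b : FullSubcategory P} {f g : a ⟶ b}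
    (cyl : CylObj MS a.obj) (hI : P cyl.I) (H : cyl.I ⟶ b.obj)
    (hf : cyl.i₀ ≫ H = f.hom) (hg : cyl.i₁ ≫ H = g.hom) : L.map f = L.map g := by
  let I : FullSubcategory P := ⟨cyl.I, hI⟩
  let π : I ⟶ a := homMk cyl.π
  have : IsIso (L.map π) := hL _ cyl.we
  have h : L.map (homMk cyl.i₀ : a ⟶ I) = L.map (homMk cyl.i₁) :=
    L.map_eq_map_of_comp_eq_id (π := π) (hom_ext _ cyl.h₀) (hom_ext _ cyl.h₁)
  rw [show f = homMk cyl.i₀ ≫ (homMk H : I ⟶ b) from hom_ext _ hf.symm,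
    show g = homMk cyl.i₁ ≫ (homMk H : I ⟶ b) from hom_ext _ hg.symm,
    L.map_comp, L.map_comp, h]

variable {Q R : E ⥤ E} (hPQ : ∀ X, P X → P (Q.obj X)) (hPR : ∀ X, P X → P (R.obj X))

abbrev cofibrantReplacement : FullSubcategory P ⥤ FullSubcategory P :=
  lift P (ι P ⋙ Q) fun d => hPQ _ d.2

abbrev fibrantCofibrantReplacement : FullSubcategory P ⥤ FullSubcategory P :=
  lift P (ι P ⋙ Q ⋙ R) fun d => hPR _ (hPQ _ d.2)

variable (q : Q ⟶ 𝟭 E) (r : 𝟭 E ⟶ R)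

def cofibrantReplacementπ : cofibrantReplacement hPQ ⟶ 𝟭 (FullSubcategory P) where
  app d := homMk (q.app d.obj)
  naturality _ _ u := hom_ext _ (q.naturality u.hom)

def fibrantReplacementι : cofibrantReplacement hPQ ⟶ fibrantCofibrantReplacement hPQ hPR where
  app d := homMk (r.app (Q.obj d.obj))
  naturality _ _ u := hom_ext _ (r.naturality (Q.map u.hom))

variable {q r} [HasInitial E] [HasTerminal E]

noncomputable def replacementIso (hq : MS.IsCofibrantReplacement q)
    (hr : MS.IsFibrantReplacement r) :
    (subW MS P).Q ≅ fibrantCofibrantReplacement hPQ hPR ⋙ (subW MS P).Q :=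
  haveI := (subW MS P).isIso_whiskerRight_Q (cofibrantReplacementπ hPQ q) fun d => (hq d.obj).2.1
  haveI := (subW MS P).isIso_whiskerRight_Q (fibrantReplacementι hPQ hPR r) fun _ => (hr _).2.1
  (Functor.leftUnitor _).symm ≪≫
    (asIso (Functor.whiskerRight (cofibrantReplacementπ hPQ q) (subW MS P).Q)).symm ≪≫
    asIso (Functor.whiskerRight (fibrantReplacementι hPQ hPR r) (subW MS P).Q)

theorem exists_Q_map_fibrantCofibrantReplacement_map_comp_eq_id [HasBinaryCoproducts E]
    (hq : MS.IsCofibrantReplacement q) (hr : MS.IsFibrantReplacement r)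
    (hcyl : ∀ X, P X → ∃ cyl : CylObj MS X, P cyl.I) ⦃a b : FullSubcategory P⦄ (w : a ⟶ b)
    (hw : subW MS P w) :
    ∃ g : (fibrantCofibrantReplacement hPQ hPR).obj b ⟶
        (fibrantCofibrantReplacement hPQ hPR).obj a,
      (subW MS P).Q.map ((fibrantCofibrantReplacement hPQ hPR).map w ≫ g) = 𝟙 _ := by
  have hRQw : MS.W (R.map (Q.map w.hom)) :=
    (MS.w_map_iff_of_natTrans r (fun X => (hr X).2.1) _).1
      ((MS.w_map_iff_of_natTrans q (fun X => (hq X).2.1) _).2 hw)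
  have hT : MS.Cofibrant (R.obj (Q.obj b.obj)) := MS.cofibrant_of_cof (hq _).2.2 (hr _).1
  obtain ⟨cyl, hI⟩ := hcyl _ (hPR _ (hPQ _ a.2))
  obtain ⟨g, H, h₀, h₁⟩ := MS.exists_homotopy_rightInverse hRQw (hr _).2.2 hT cyl
  refine ⟨homMk g, ?_⟩
  rw [← (subW MS P).Q.map_id]
  exact ((subW MS P).Q_inverts.map_eq_of_cylinder_homotopy cyl hI H h₀ h₁).symm

variable {hPQ hPR} (hq : MS.IsCofibrantReplacement q) (hr : MS.IsFibrantReplacement r)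

theorem Q_map_cofibrantReplacementπ_app_comp_replacementIso_hom_app (d : FullSubcategory P) :
    (subW MS P).Q.map ((cofibrantReplacementπ hPQ q).app d) ≫
      (replacementIso hPQ hPR hq hr).hom.app d =
    (subW MS P).Q.map ((fibrantReplacementι hPQ hPR r).app d) := by
  simp [replacementIso]

theorem Q_map_fibrantReplacementι_app_comp_replacementIso_inv_app (d : FullSubcategory P) :
    (subW MS P).Q.map ((fibrantReplacementι hPQ hPR r).app d) ≫
      (replacementIso hPQ hPR hq hr).inv.app d =
    (subW MS P).Q.map ((cofibrantReplacementπ hPQ q).app d) := by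
  simp [replacementIso]

theorem exists_Q_map_eq_replacementIso_hom_app {x : FullSubcategory P}
    (hx : MS.Cofibrant x.obj) :
    ∃ h : x ⟶ (fibrantCofibrantReplacement hPQ hPR).obj x,
      (subW MS P).Q.map h = (replacementIso hPQ hPR hq hr).hom.app x := by
  obtain ⟨s, hs⟩ := MS.exists_section_of_cofibrant (hq x.obj).1 (hq x.obj).2.1 hx
  let s' : x ⟶ (cofibrantReplacement hPQ).obj x := homMk s
  refine ⟨s' ≫ (fibrantReplacementι hPQ hPR r).app x, ?_⟩
  have hs' : s' ≫ (cofibrantReplacementπ hPQ q).app x = 𝟙 x := hom_ext _ hs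
  rw [Functor.map_comp, ← Q_map_cofibrantReplacementπ_app_comp_replacementIso_hom_app hq hr,
    ← Functor.map_comp_assoc, hs', (subW MS P).Q.map_id, Category.id_comp]

theorem exists_Q_map_eq_replacementIso_inv_app {y : FullSubcategory P}
    (hy : MS.Fibrant y.obj) :
    ∃ t : (fibrantCofibrantReplacement hPQ hPR).obj y ⟶ y,
      (subW MS P).Q.map t = (replacementIso hPQ hPR hq hr).inv.app y := by
  obtain ⟨t, ht⟩ := MS.exists_extension_of_fibrant (hr _).1 (hr _).2.1 hy (q.app y.obj)
  let ι := (fibrantReplacementι hPQ hPR r).app y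
  have : IsIso ((subW MS P).Q.map ι) := (subW MS P).Q_inverts _ (hr _).2.1
  refine ⟨homMk t, ?_⟩
  rw [← cancel_epi ((subW MS P).Q.map ι),
    Q_map_fibrantReplacementι_app_comp_replacementIso_inv_app hq hr, ← Functor.map_comp]
  exact congrArg _ (hom_ext _ ht)

end Replacement

theorem localization_surjective_on_fibrant_cofibrant_general
    {E : Type u} [Category.{v} E] [HasBinaryCoproducts E] [HasInitial E] [HasTerminal E]
    (MS : ModelStructure E)
    (Q R : E ⥤ E) (q : Q ⟶ 𝟭 E) (r : 𝟭 E ⟶ R)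
    (hq : ∀ X : E, MS.Fib (q.app X) ∧ MS.W (q.app X) ∧ MS.Cofibrant (Q.obj X))
    (hr : ∀ X : E, MS.Cof (r.app X) ∧ MS.W (r.app X) ∧ MS.Fibrant (R.obj X))
    (P : E → Prop)
    (hPQ : ∀ X : E, P X → P (Q.obj X)) (hPR : ∀ X : E, P X → P (R.obj X))
    (hcyl : ∀ X : E, P X → ∃ cyl : CylObj MS X, P cyl.I)
    {X Y : E} (hX : P X) (hY : P Y)
    (hXc : MS.Cofibrant X)
    (hYf : MS.Fibrant Y) :
    Function.Surjective
      (fun f : ((⟨X, hX⟩ : ObjectProperty.FullSubcategory P) ⟶ ⟨Y, hY⟩) => (subW MS P).Q.map f) := by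
  intro φ
  obtain ⟨f, rfl⟩ := MorphismProperty.exists_hom_app_comp_Q_map_comp_inv_app_eq
    (replacementIso hPQ hPR hq hr)
    (exists_Q_map_fibrantCofibrantReplacement_map_comp_eq_id hPQ hPR hq hr hcyl) φ
  obtain ⟨h, hh⟩ := exists_Q_map_eq_replacementIso_hom_app hq hr (x := ⟨X, hX⟩) hXc
  obtain ⟨t, ht⟩ := exists_Q_map_eq_replacementIso_inv_app hq hr (y := ⟨Y, hY⟩) hYf
  exact ⟨h ≫ f ≫ t, by simp [hh, ht]⟩

/-- for `X, Y` fibrant-cofibrant objects of a full subcategory `D` closed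
under (co)fibrant replacement and admitting cylinders, the canonical localization
functor `L : D → D[W_D⁻¹]` is surjective on morphisms from `X` to `Y`. -/
theorem localization_surjective_on_fibrant_cofibrant
    {E : Type u} [Category.{v} E] [HasBinaryCoproducts E] [HasInitial E] [HasTerminal E]
    (MS : ModelStructure E)
    (Q R : E ⥤ E) (q : Q ⟶ 𝟭 E) (r : 𝟭 E ⟶ R)
    (hq : ∀ X : E, MS.Fib (q.app X) ∧ MS.W (q.app X) ∧ MS.Cofibrant (Q.obj X))
    (hr : ∀ X : E, MS.Cof (r.app X) ∧ MS.W (r.app X) ∧ MS.Fibrant (R.obj X))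
    (P : E → Prop)
    (hPQ : ∀ X : E, P X → P (Q.obj X)) (hPR : ∀ X : E, P X → P (R.obj X))
    (hcyl : ∀ X : E, P X → ∃ cyl : CylObj MS X, P cyl.I)
    {X Y : E} (hX : P X) (hY : P Y)
    (hXf : MS.Fibrant X) (hXc : MS.Cofibrant X)
    (hYf : MS.Fibrant Y) (hYc : MS.Cofibrant Y) :
    Function.Surjective
      (fun f : ((⟨X, hX⟩ : ObjectProperty.FullSubcategory P) ⟶ ⟨Y, hY⟩) => (subW MS P).Q.map f) :=
  localization_surjective_on_fibrant_cofibrant_general MS Q R q r hq hr P hPQ hPR hcyl hX hY hXc hYf
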